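/- arXiv:1703.07087 — 3 statements merged into one kernel-verified Lean document; each statement's English description precedes it below -/
import Mathlib

section
/- Let a₂, b₂ > 0, c₁ = 1/4, c₂ = 2b₂²/a₂ + 1/4, and p > 1. Then the quantity (p/a₂^{p+1})(c₁ + c₂) - (p(p+1)/a₂^{p+2}) b₂² equals (p/a₂^{p+2})(a₂/2 + (1-p) b₂²), and this is strictly negative whenever b₂² > a₂/(2(p-1)). In particular, for every p > 1 and a₂ > 0 there exists b₂ > 0 making the expression negative. -/
/-- The key computation of the counterexample: with `c₁ = 1/4`,
`c₂ = 2b₂²/a₂ + 1/4`, the quantity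
`(p/a₂^(p+1))(c₁+c₂) - (p(p+1)/a₂^(p+2)) b₂²` equals
`(p/a₂^(p+2))(a₂/2 + (1-p)b₂²)`, is negative when `b₂² > a₂/(2(p-1))`, and for
every `p > 1`, `a₂ > 0` some `b₂ > 0` makes it negative. -/
theorem counterexample_computation (p a₂ : ℝ) (hp : 1 < p) (ha : 0 < a₂) :
    (∀ b₂ : ℝ, 0 < b₂ →
      (p / a₂ ^ (p + 1)) * (1 / 4 + (2 * b₂ ^ 2 / a₂ + 1 / 4)) -
          (p * (p + 1) / a₂ ^ (p + 2)) * b₂ ^ 2 =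
        (p / a₂ ^ (p + 2)) * (a₂ / 2 + (1 - p) * b₂ ^ 2)) ∧
    (∀ b₂ : ℝ, 0 < b₂ → b₂ ^ 2 > a₂ / (2 * (p - 1)) →
      (p / a₂ ^ (p + 1)) * (1 / 4 + (2 * b₂ ^ 2 / a₂ + 1 / 4)) -
          (p * (p + 1) / a₂ ^ (p + 2)) * b₂ ^ 2 < 0) ∧
    (∃ b₂ : ℝ, 0 < b₂ ∧
      (p / a₂ ^ (p + 1)) * (1 / 4 + (2 * b₂ ^ 2 / a₂ + 1 / 4)) -
          (p * (p + 1) / a₂ ^ (p + 2)) * b₂ ^ 2 < 0) := by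
  have hpow : a₂ ^ (p + 2) = a₂ ^ (p + 1) * a₂ := by
    rw [show p + 2 = (p + 1) + 1 by ring, Real.rpow_add ha, Real.rpow_one]
  have h1 : (0:ℝ) < a₂ ^ (p + 1) := Real.rpow_pos_of_pos ha _
  have h2 : (0:ℝ) < a₂ ^ (p + 2) := Real.rpow_pos_of_pos ha _
  have key : ∀ b₂ : ℝ,
      (p / a₂ ^ (p + 1)) * (1 / 4 + (2 * b₂ ^ 2 / a₂ + 1 / 4)) -
          (p * (p + 1) / a₂ ^ (p + 2)) * b₂ ^ 2 =
        (p / a₂ ^ (p + 2)) * (a₂ / 2 + (1 - p) * b₂ ^ 2) := by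
    intro b₂
    rw [hpow]
    field_simp
    ring
  refine ⟨fun b₂ _ => key b₂, fun b₂ _ hb2 => ?_, ?_⟩
  · rw [key b₂]
    have hp1 : (0:ℝ) < p - 1 := by linarith
    have h3 : a₂ / 2 + (1 - p) * b₂ ^ 2 < 0 := by
      have h4 : a₂ < b₂ ^ 2 * (2 * (p - 1)) := (div_lt_iff₀ (by positivity)).mp hb2
      nlinarith
    exact mul_neg_of_pos_of_neg (by positivity) h3
  · have hp1 : (0:ℝ) < p - 1 := by linarith
    refine ⟨Real.sqrt (a₂ / (p - 1)), Real.sqrt_pos.mpr (by positivity), ?_⟩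
    rw [key]
    have hsq : Real.sqrt (a₂ / (p - 1)) ^ 2 = a₂ / (p - 1) := by
      rw [sq, Real.mul_self_sqrt (by positivity)]
    rw [hsq]
    have h3 : a₂ / 2 + (1 - p) * (a₂ / (p - 1)) < 0 := by
      have h4 : (1 - p) * (a₂ / (p - 1)) = -a₂ := by
        field_simp
        ring
      rw [h4]; linarith
    exact mul_neg_of_pos_of_neg (by positivity) h3
end

section
/- Let n ≥ 2 and κ ∈ ℝⁿ with all κᵢ > 0, H = Σκᵢ. If Σκᵢ² - H²/n < c₀H² with 0 < c₀ < 1/(n(n-1)), then κᵢ > 0 implies in fact κ₁ > (1/n - √((n-1)c₀/n)) H > 0; i.e., the pinching condition with c₀ < 1/(n(n-1)) forces strict convexity quantitatively. -/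
/-!
The deviations `κⱼ - H/n` from the mean sum to zero, so each one is minus the sum of the other
`n - 1`, and Cauchy–Schwarz gives `n (κᵢ - H/n)² ≤ (n - 1) Σⱼ (κⱼ - H/n)²`. The right-hand sum
is `Σ κⱼ² - H²/n < c₀ H²`, whence `|κᵢ - H/n| < √((n-1)c₀/n) · H`. Finally
`c₀ < 1/(n(n-1))` is exactly `√((n-1)c₀/n) < 1/n`.
-/

open Finset

theorem card_mul_sq_le_of_sum_eq_zero {ι R : Type*} [Fintype ι] [CommRing R] [LinearOrder R]
    [IsStrictOrderedRing R] {f : ι → R} (hf : ∑ j, f j = 0) (i : ι) :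
    Fintype.card ι * f i ^ 2 ≤ (Fintype.card ι - 1) * ∑ j, f j ^ 2 := by
  classical
  have hsum := add_sum_erase univ f (mem_univ i)
  have hsum_sq := add_sum_erase univ (fun j => f j ^ 2) (mem_univ i)
  have hcard : ((univ.erase i).card : R) = Fintype.card ι - 1 := by
    rw [card_erase_of_mem (mem_univ i), card_univ,
      Nat.cast_pred (Fintype.card_pos_iff.mpr ⟨i⟩)]
  have hcs : f i ^ 2 ≤ (Fintype.card ι - 1) * ∑ j ∈ univ.erase i, f j ^ 2 := by
    calc f i ^ 2 = (∑ j ∈ univ.erase i, f j) ^ 2 := by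
          rw [eq_neg_of_add_eq_zero_left (hsum.trans hf), neg_sq]
      _ ≤ _ := hcard ▸ sq_sum_le_card_mul_sum_sq
  rw [← hsum_sq]
  linear_combination hcs

theorem sum_sq_sub_mean {ι K : Type*} [Fintype ι] [Field K] [CharZero K] (κ : ι → K) :
    ∑ j, (κ j - (∑ i, κ i) / Fintype.card ι) ^ 2
      = ∑ j, κ j ^ 2 - (∑ i, κ i) ^ 2 / Fintype.card ι := by
  rcases isEmpty_or_nonempty ι with _ | _
  · simp
  have hn : (Fintype.card ι : K) ≠ 0 := Nat.cast_ne_zero.mpr Fintype.card_ne_zero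
  simp only [sub_sq, sum_add_distrib, sum_sub_distrib, ← sum_mul, ← mul_sum, sum_const,
    card_univ, nsmul_eq_mul]
  field_simp
  ring

theorem sum_sub_mean_eq_zero {ι K : Type*} [Fintype ι] [Field K] [CharZero K] (κ : ι → K) :
    ∑ j, (κ j - (∑ i, κ i) / Fintype.card ι) = 0 := by
  rcases isEmpty_or_nonempty ι with _ | _
  · simp
  have hn : (Fintype.card ι : K) ≠ 0 := Nat.cast_ne_zero.mpr Fintype.card_ne_zero
  simp only [sum_sub_distrib, sum_const, card_univ, nsmul_eq_mul]
  field_simp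
  ring

theorem abs_sub_mean_lt_of_pinching {ι : Type*} [Fintype ι] (hn : 1 < Fintype.card ι) {c : ℝ}
    (κ : ι → ℝ)
    (hpinch : ∑ j, κ j ^ 2 - (∑ j, κ j) ^ 2 / Fintype.card ι < c * (∑ j, κ j) ^ 2) (i : ι) :
    |κ i - (∑ j, κ j) / Fintype.card ι|
      < √((Fintype.card ι - 1) * c / Fintype.card ι) * |∑ j, κ j| := by
  set n : ℝ := (Fintype.card ι : ℝ)
  set H := ∑ j, κ j
  have hn1 : 1 < n := Nat.one_lt_cast.mpr hn
  have hdev := card_mul_sq_le_of_sum_eq_zero (sum_sub_mean_eq_zero κ) i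
  rw [sum_sq_sub_mean] at hdev
  have hsq : (κ i - H / n) ^ 2 < (n - 1) * c / n * H ^ 2 := by
    rw [div_mul_eq_mul_div, lt_div_iff₀ (by linarith)]
    nlinarith
  calc |κ i - H / n| = √((κ i - H / n) ^ 2) := (Real.sqrt_sq_eq_abs _).symm
    _ < √((n - 1) * c / n * H ^ 2) := Real.sqrt_lt_sqrt (sq_nonneg _) hsq
    _ = √((n - 1) * c / n) * |H| := by rw [Real.sqrt_mul' _ (sq_nonneg H), Real.sqrt_sq_eq_abs]

theorem pinching_strict_convexity_general (n : ℕ) (hn : 2 ≤ n) (c₀ : ℝ)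
    (hc₀' : c₀ < 1 / (n * (n - 1) : ℝ))
    (κ : Fin n → ℝ) (hκ : ∀ i, 0 < κ i) (H : ℝ) (hH : H = ∑ i, κ i)
    (hpinch : (∑ i, (κ i) ^ 2) - H ^ 2 / n < c₀ * H ^ 2) :
    (∀ i, κ i > (1 / n - Real.sqrt ((n - 1) * c₀ / n)) * H) ∧
    (1 / n - Real.sqrt ((n - 1) * c₀ / n)) * H > 0 := by
  have hn2 : (2 : ℝ) ≤ n := by exact_mod_cast hn
  have hH0 : 0 < H := hH ▸ sum_pos (fun i _ => hκ i) ⟨⟨0, by omega⟩, mem_univ _⟩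
  have hsqrt : √((n - 1) * c₀ / n) < 1 / n := by
    have hc₀n : c₀ * (n * (n - 1)) < 1 := (lt_div_iff₀ (by nlinarith)).mp hc₀'
    rw [Real.sqrt_lt' (by positivity), div_pow, one_pow,
      div_lt_div_iff₀ (by positivity) (by positivity)]
    nlinarith
  refine ⟨fun i => ?_, mul_pos (sub_pos.mpr hsqrt) hH0⟩
  have hdev := abs_sub_mean_lt_of_pinching (by rw [Fintype.card_fin]; omega) κ
    (by simpa [← hH] using hpinch) i
  simp only [Fintype.card_fin, ← hH, abs_of_pos hH0] at hdev
  calc (1 / n - √((n - 1) * c₀ / n)) * H = H / n - √((n - 1) * c₀ / n) * H := by ring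
    _ < κ i := by linarith [neg_abs_le (κ i - H / n)]

/-- The strict pinching condition with `c₀ < 1/(n(n-1))` quantitatively forces
strict convexity: each principal curvature satisfies
`κᵢ > (1/n - √((n-1)c₀/n))·H > 0`. -/
theorem pinching_strict_convexity (n : ℕ) (hn : 2 ≤ n) (c₀ : ℝ)
    (hc₀ : 0 < c₀) (hc₀' : c₀ < 1 / (n * (n - 1) : ℝ))
    (κ : Fin n → ℝ) (hκ : ∀ i, 0 < κ i) (H : ℝ) (hH : H = ∑ i, κ i)
    (hpinch : (∑ i, (κ i) ^ 2) - H ^ 2 / n < c₀ * H ^ 2) :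
    (∀ i, κ i > (1 / n - Real.sqrt ((n - 1) * c₀ / n)) * H) ∧
    (1 / n - Real.sqrt ((n - 1) * c₀ / n)) * H > 0 :=
  pinching_strict_convexity_general n hn c₀ hc₀' κ hκ H hH hpinch
end

section
/- Let n ≥ 2 and let b be a symmetric n×n positive semidefinite real matrix with eigenvalues λ₁ ≤ … ≤ λₙ, trace B > 0, and ‖b‖² = Σλᵢ². Suppose ‖b‖² - B²/n = c₀B² with 0 < c₀ < 1/(n(n-1)). Then tr(b³) - (1/n + c₀)·B·‖b‖² ≥ c₀(1/n + c₀)(1 - √(n(n-1)c₀))·B³ > 0. -/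
/-!
Write `μ = λ - (B/n)·1` for the traceless part of the eigenvalue vector. The hypothesis says
`|μ|² = c₀B²`, and the gap `tr(b³) - (1/n + c₀)·B·|b|²` equals `Σμᵢ³ + (c₀/n - c₀²)·B³`, so
everything rests on a lower bound for `Σμᵢ³`. For a traceless vector, Cauchy–Schwarz on the other
entries gives `μᵢ ≥ -(n-1)σ/k` with `σ = |μ|`, `k = √(n(n-1))`; hence the cubic
`Σ (kμᵢ + (n-1)σ)(kμᵢ - σ)²` is nonnegative, and expanding it gives the sharp bound
`k·Σμᵢ³ ≥ -(n-2)σ³`. The stated estimate falls short of this one by `σ³(1 - √(n(n-1)c₀))²/k`.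
-/

open Finset

namespace Matrix.IsHermitian

variable {𝕜 n : Type*} [RCLike 𝕜] [Fintype n] [DecidableEq n] {A : Matrix n n 𝕜}

theorem trace_pow_eq_sum_eigenvalues_pow (hA : A.IsHermitian) (k : ℕ) :
    (A ^ k).trace = ∑ i, (hA.eigenvalues i : 𝕜) ^ k := by
  conv_lhs => rw [hA.spectral_theorem, ← map_pow, Unitary.conjStarAlgAut_apply,
    trace_mul_cycle, Unitary.coe_star_mul_self, one_mul, diagonal_pow, trace_diagonal]
  rfl

end Matrix.IsHermitian

section PowerSums

variable {ι R : Type*} [Fintype ι] [CommRing R]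

theorem sum_sub_const_sq (x : ι → R) (c : R) :
    ∑ i, (x i - c) ^ 2 = ∑ i, x i ^ 2 - 2 * c * ∑ i, x i + Fintype.card ι * c ^ 2 := by
  have e (i : ι) : (x i - c) ^ 2 = x i ^ 2 - 2 * c * x i + c ^ 2 := by ring
  simp only [e, sum_add_distrib, sum_sub_distrib, ← mul_sum, sum_const, card_univ, nsmul_eq_mul]

theorem sum_sub_const_pow_three (x : ι → R) (c : R) :
    ∑ i, (x i - c) ^ 3 = ∑ i, x i ^ 3 - 3 * c * ∑ i, x i ^ 2 + 3 * c ^ 2 * ∑ i, x i -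
      Fintype.card ι * c ^ 3 := by
  have e (i : ι) : (x i - c) ^ 3 = x i ^ 3 - 3 * c * x i ^ 2 + 3 * c ^ 2 * x i - c ^ 3 := by ring
  simp only [e, sum_add_distrib, sum_sub_distrib, ← mul_sum, sum_const, card_univ, nsmul_eq_mul]

end PowerSums

section TracelessTuple

variable {ι : Type*} [Fintype ι] {μ : ι → ℝ}

theorem card_mul_sq_le_of_sum_eq_zero_s9 (h : ∑ j, μ j = 0) (i : ι) :
    Fintype.card ι * μ i ^ 2 ≤ (Fintype.card ι - 1) * ∑ j, μ j ^ 2 := by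
  classical
  have hrest : ∑ j ∈ univ.erase i, μ j = -μ i := by
    linarith [add_sum_erase univ μ (mem_univ i)]
  have hrest_sq : ∑ j ∈ univ.erase i, μ j ^ 2 = ∑ j, μ j ^ 2 - μ i ^ 2 := by
    linarith [add_sum_erase univ (μ · ^ 2) (mem_univ i)]
  have hcard : ((univ.erase i).card : ℝ) = Fintype.card ι - 1 := by
    rw [card_erase_of_mem (mem_univ i), card_univ, Nat.cast_sub (Fintype.card_pos_iff.2 ⟨i⟩),
      Nat.cast_one]
  have hCS := sq_sum_le_card_mul_sum_sq (s := univ.erase i) (f := μ)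
  rw [hrest, hrest_sq, hcard, neg_sq] at hCS
  linarith

theorem neg_mul_sqrt_sum_sq_le_of_sum_eq_zero (h : ∑ j, μ j = 0) (i : ι) :
    -((Fintype.card ι - 1) * √(∑ j, μ j ^ 2)) ≤
      √(Fintype.card ι * (Fintype.card ι - 1)) * μ i := by
  have hN : (1 : ℝ) ≤ Fintype.card ι := Nat.one_le_cast.2 (Fintype.card_pos_iff.2 ⟨i⟩)
  refine (abs_le_of_sq_le_sq' ?_ (by positivity)).1
  rw [mul_pow, mul_pow, Real.sq_sqrt (by positivity), Real.sq_sqrt (by positivity)]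
  nlinarith [mul_le_mul_of_nonneg_left (card_mul_sq_le_of_sum_eq_zero_s9 h i) (sub_nonneg.2 hN)]

theorem neg_mul_sqrt_sum_sq_pow_three_le_of_sum_eq_zero (hN : 2 ≤ Fintype.card ι)
    (h : ∑ j, μ j = 0) :
    -((Fintype.card ι - 2) * √(∑ j, μ j ^ 2) ^ 3) ≤
      √(Fintype.card ι * (Fintype.card ι - 1)) * ∑ j, μ j ^ 3 := by
  have hN : (2 : ℝ) ≤ Fintype.card ι := by exact_mod_cast hN
  set N : ℝ := (Fintype.card ι : ℝ)
  set σ := √(∑ j, μ j ^ 2)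
  set k := √(N * (N - 1))
  have hσ : σ ^ 2 = ∑ j, μ j ^ 2 := Real.sq_sqrt (sum_nonneg fun j _ => sq_nonneg (μ j))
  have hk : k ^ 2 = N * (N - 1) := Real.sq_sqrt (by nlinarith)
  -- equality holds for `μ` proportional to `(-(N - 1), 1, …, 1)`
  have hpos : 0 ≤ ∑ j, (k * μ j + (N - 1) * σ) * (k * μ j - σ) ^ 2 :=
    sum_nonneg fun j _ => mul_nonneg
      (by linarith [neg_mul_sqrt_sum_sq_le_of_sum_eq_zero h j]) (sq_nonneg _)
  have hexpand : ∑ j, (k * μ j + (N - 1) * σ) * (k * μ j - σ) ^ 2 =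
      N * (N - 1) * (k * ∑ j, μ j ^ 3 + (N - 2) * σ ^ 3) := by
    have e (j : ι) : (k * μ j + (N - 1) * σ) * (k * μ j - σ) ^ 2 =
        k ^ 3 * μ j ^ 3 + (N - 3) * k ^ 2 * σ * μ j ^ 2 + (3 - 2 * N) * k * σ ^ 2 * μ j
          + (N - 1) * σ ^ 3 := by ring
    simp only [e, sum_add_distrib, ← mul_sum, sum_const, card_univ, nsmul_eq_mul, h]
    linear_combination (k * ∑ j, μ j ^ 3 + (N - 3) * σ ^ 3) * hk - (N - 3) * k ^ 2 * σ * hσ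
  rw [hexpand, mul_nonneg_iff_of_pos_left (by nlinarith)] at hpos
  linarith

end TracelessTuple

theorem pinching_sum_cube_estimate {ι : Type*} [Fintype ι] {x : ι → ℝ}
    (hN : 2 ≤ Fintype.card ι) {c₀ : ℝ} (hc₀ : 0 ≤ c₀) (hB : 0 ≤ ∑ i, x i)
    (hpinch : ∑ i, x i ^ 2 - (∑ i, x i) ^ 2 / Fintype.card ι = c₀ * (∑ i, x i) ^ 2) :
    c₀ * (1 / Fintype.card ι + c₀) * (1 - √(Fintype.card ι * (Fintype.card ι - 1) * c₀)) *
        (∑ i, x i) ^ 3 ≤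
      ∑ i, x i ^ 3 - (1 / Fintype.card ι + c₀) * (∑ i, x i) * ∑ i, x i ^ 2 := by
  have hN' : (2 : ℝ) ≤ Fintype.card ι := by exact_mod_cast hN
  set N : ℝ := (Fintype.card ι : ℝ) with hNdef
  set B := ∑ i, x i with hBdef
  set T := ∑ i, x i ^ 3
  obtain ⟨t, ht, rfl⟩ : ∃ t, 0 ≤ t ∧ c₀ = t ^ 2 :=
    ⟨√c₀, Real.sqrt_nonneg _, (Real.sq_sqrt hc₀).symm⟩
  set k := √(N * (N - 1))
  have hk : k ^ 2 = N * (N - 1) := Real.sq_sqrt (by nlinarith)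
  have hkpos : 0 < k := Real.sqrt_pos.2 (by nlinarith)
  have hr : √(N * (N - 1) * t ^ 2) = k * t := by
    rw [Real.sqrt_mul (by nlinarith), Real.sqrt_sq ht]
  have hS : ∑ i, x i ^ 2 = B ^ 2 / N + t ^ 2 * B ^ 2 := by linarith
  have hμ1 : ∑ i, (x i - B / N) = 0 := by
    rw [sum_sub_distrib, sum_const, card_univ, nsmul_eq_mul]
    field_simp
    ring
  have hμ2 : √(∑ i, (x i - B / N) ^ 2) = t * B := by
    rw [sum_sub_const_sq, hS, ← hBdef, ← hNdef, ← Real.sqrt_sq (mul_nonneg ht hB)]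
    congr 1
    field_simp
    ring
  have hcube := neg_mul_sqrt_sum_sq_pow_three_le_of_sum_eq_zero hN hμ1
  rw [← hNdef, hμ2, sum_sub_const_pow_three, hS, ← hBdef] at hcube
  rw [hr, hS]
  refine le_of_mul_le_mul_left ?_ hkpos
  have key : k * (T - (1 / N + t ^ 2) * B * (B ^ 2 / N + t ^ 2 * B ^ 2)) -
      k * (t ^ 2 * (1 / N + t ^ 2) * (1 - k * t) * B ^ 3) =
      (k * (T - 3 * (B / N) * (B ^ 2 / N + t ^ 2 * B ^ 2) + 3 * (B / N) ^ 2 * B -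
          N * (B / N) ^ 3) + (N - 2) * (t * B) ^ 3) + (t * B) ^ 3 * (1 - k * t) ^ 2 := by
    field_simp
    linear_combination t ^ 3 * B ^ 3 * N * hk
  linarith [mul_nonneg (pow_nonneg (mul_nonneg ht hB) 3) (sq_nonneg (1 - k * t))]

theorem cubic_pinching_estimate_general (n : ℕ) (hn : 2 ≤ n)
    (b : Matrix (Fin n) (Fin n) ℝ) (hsymm : b.IsSymm)
    (c₀ : ℝ) (hc₀ : 0 < c₀) (hc₀' : c₀ < 1 / (n * (n - 1) : ℝ))
    (hB : 0 < Matrix.trace b)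
    (hpinch : Matrix.trace (b * b) - (Matrix.trace b) ^ 2 / n =
      c₀ * (Matrix.trace b) ^ 2) :
    Matrix.trace (b * b * b) - (1 / n + c₀) * Matrix.trace b * Matrix.trace (b * b) ≥
      c₀ * (1 / n + c₀) * (1 - Real.sqrt (n * (n - 1) * c₀)) * (Matrix.trace b) ^ 3 ∧
    0 < c₀ * (1 / n + c₀) * (1 - Real.sqrt (n * (n - 1) * c₀)) * (Matrix.trace b) ^ 3 := by
  have hb : b.IsHermitian := Matrix.isHermitian_iff_isSymm.2 hsymm
  have htrace (k : ℕ) : (b ^ k).trace = ∑ i, hb.eigenvalues i ^ k := by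
    simpa using hb.trace_pow_eq_sum_eigenvalues_pow k
  have h1 : b.trace = ∑ i, hb.eigenvalues i := by simpa using htrace 1
  have h2 : (b * b).trace = ∑ i, hb.eigenvalues i ^ 2 := by rw [← sq, htrace]
  have h3 : (b * b * b).trace = ∑ i, hb.eigenvalues i ^ 3 := by rw [← pow_three', htrace]
  rw [h1] at hB
  rw [h1, h2] at hpinch
  rw [h1, h2, h3]
  have hr : √(n * (n - 1) * c₀) < 1 := by
    have hn' : (0 : ℝ) < n * (n - 1) := by
      have : (2 : ℝ) ≤ n := by exact_mod_cast hn
      nlinarith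
    rw [Real.sqrt_lt' one_pos, one_pow, mul_comm]
    exact (lt_div_iff₀ hn').1 hc₀'
  refine ⟨?_, mul_pos (mul_pos (by positivity) (sub_pos.2 hr)) (pow_pos hB 3)⟩
  simpa using pinching_sum_cube_estimate (x := hb.eigenvalues) (by simpa using hn) hc₀.le hB.le
    (by simpa using hpinch)

/-- (Andrews–McCoy, Lemma 2.3.) If a symmetric positive semidefinite matrix `b`
with `B = tr b > 0` satisfies `tr(b²) - B²/n = c₀B²` with
`0 < c₀ < 1/(n(n-1))`, then
`tr(b³) - (1/n + c₀)·B·tr(b²) ≥ c₀(1/n + c₀)(1 - √(n(n-1)c₀))·B³ > 0`. -/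
theorem cubic_pinching_estimate (n : ℕ) (hn : 2 ≤ n)
    (b : Matrix (Fin n) (Fin n) ℝ) (hsymm : b.IsSymm) (hpsd : b.PosSemidef)
    (c₀ : ℝ) (hc₀ : 0 < c₀) (hc₀' : c₀ < 1 / (n * (n - 1) : ℝ))
    (hB : 0 < Matrix.trace b)
    (hpinch : Matrix.trace (b * b) - (Matrix.trace b) ^ 2 / n =
      c₀ * (Matrix.trace b) ^ 2) :
    Matrix.trace (b * b * b) - (1 / n + c₀) * Matrix.trace b * Matrix.trace (b * b) ≥
      c₀ * (1 / n + c₀) * (1 - Real.sqrt (n * (n - 1) * c₀)) * (Matrix.trace b) ^ 3 ∧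
    0 < c₀ * (1 / n + c₀) * (1 - Real.sqrt (n * (n - 1) * c₀)) * (Matrix.trace b) ^ 3 :=
  cubic_pinching_estimate_general n hn b hsymm c₀ hc₀ hc₀' hB hpinch
end
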